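/- Let f in C[x_0,...,x_n] be homogeneous of degree d and suppose the hyperplane x_0 = 0 is transversal to D: f = 0 (i.e., the restriction of f to x_0 = 0 defines a smooth hypersurface in P^{n-1}, and D has only isolated singularities not on this hyperplane). Then multiplication by x_0 induces an injection H^n(K^*(f))_{s-1} -> H^n(K^*(f))_s for every s. -/

import Mathlib

set_option linter.unusedSectionVars false

open MvPolynomial

noncomputable section

namespace KoszulEngineAux

variable {R : Type*} [CommRing R] [Algebra ℂ R] {M : ℕ}

lemma csmul_mem {J : Ideal R} (c : ℂ) {x : R} (hx : x ∈ J) : c • x ∈ J := by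
  rw [Algebra.smul_def]; exact J.mul_mem_left _ hx

lemma smul_eq_zero_cancel {c : ℂ} (hc : c ≠ 0) {x : R} (h : c • x = 0) : x = 0 := by
  have := congrArg (fun y => c⁻¹ • y) h
  simpa [smul_smul, inv_mul_cancel₀ hc] using this

lemma eq_zero_of_self_eq_neg {x : R} (h : x = -x) : x = 0 := by
  have h2 : (2 : ℂ) • x = 0 := by
    rw [two_smul]; nth_rewrite 1 [h]; simp
  exact smul_eq_zero_cancel two_ne_zero h2

/-- Koszul-type boundary of a `(k+1)`-tensor. -/
def bdry (G : Fin M → R) {k : ℕ} (T : (Fin (k+1) → Fin M) → R) : (Fin k → Fin M) → R :=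
  fun v => ∑ j, G j * T (Fin.cons j v)

/-- Alternating (antisymmetric under all transpositions of the arguments). -/
def Alt {k : ℕ} (T : (Fin k → Fin M) → R) : Prop :=
  ∀ (v : Fin k → Fin M) (i j : Fin k), i ≠ j → T (v ∘ Equiv.swap i j) = - T v

/-- Alternating modulo an ideal. -/
def AltMod {k : ℕ} (J : Ideal R) (T : (Fin k → Fin M) → R) : Prop :=
  ∀ (v : Fin k → Fin M) (i j : Fin k), i ≠ j → T (v ∘ Equiv.swap i j) + T v ∈ J

lemma comp_swap_eq {α : Type*} {k : ℕ} (v : Fin k → α) {i j : Fin k} (h : v i = v j) :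
    v ∘ Equiv.swap i j = v := by
  funext x
  rcases eq_or_ne x i with rfl | hi
  · simp [h.symm]
  rcases eq_or_ne x j with rfl | hj
  · simp [h]
  · simp [Function.comp, Equiv.swap_apply_of_ne_of_ne hi hj]

lemma Alt.diag_zero {k : ℕ} {T : (Fin k → Fin M) → R} (hT : Alt T) {v : Fin k → Fin M}
    {i j : Fin k} (hij : i ≠ j) (h : v i = v j) : T v = 0 :=
  eq_zero_of_self_eq_neg (by rw [← hT v i j hij, comp_swap_eq v h])

lemma Alt.perm {k : ℕ} {T : (Fin k → Fin M) → R} (hT : Alt T) (σ : Equiv.Perm (Fin k)) :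
    ∀ v, T (v ∘ σ) = (Equiv.Perm.sign σ : ℤ) • T v := by
  refine Equiv.Perm.swap_induction_on σ (by intro v; simp) ?_
  intro f x y hxy ih v
  have h1 : v ∘ ⇑(Equiv.swap x y * f) = (v ∘ ⇑(Equiv.swap x y)) ∘ ⇑f := by
    funext t; simp [Function.comp, Equiv.Perm.mul_apply]
  rw [h1, ih, hT v x y hxy, Equiv.Perm.sign_mul, Equiv.Perm.sign_swap hxy]
  rcases Int.units_eq_one_or (Equiv.Perm.sign f) with h | h <;> simp [h]

/-- Full antisymmetrization of a tensor. -/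
def symz {k : ℕ} (E : (Fin k → Fin M) → R) : (Fin k → Fin M) → R :=
  fun w => ((k.factorial : ℂ))⁻¹ •
    ∑ σ : Equiv.Perm (Fin k), (Equiv.Perm.sign σ : ℤ) • E (w ∘ σ)

lemma symz_alt {k : ℕ} (E : (Fin k → Fin M) → R) : Alt (symz E) := by
  intro v i j hij
  unfold symz
  rw [← smul_neg]
  congr 1
  rw [← Finset.sum_neg_distrib]
  refine Fintype.sum_equiv (Equiv.mulLeft (Equiv.swap i j)) _ _ ?_
  intro σ
  have h1 : (v ∘ ⇑(Equiv.swap i j)) ∘ ⇑σ = v ∘ ⇑(Equiv.swap i j * σ) := by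
    funext t; simp [Function.comp, Equiv.Perm.mul_apply]
  rw [Equiv.coe_mulLeft, h1]
  have h2 : Equiv.Perm.sign (Equiv.swap i j * σ) = - Equiv.Perm.sign σ := by
    rw [Equiv.Perm.sign_mul, Equiv.Perm.sign_swap hij, neg_one_mul]
  rw [h2]
  rcases Int.units_eq_one_or (Equiv.Perm.sign σ) with h | h <;> simp [h]

lemma signed_congr {k : ℕ} {J : Ideal R} {E : (Fin k → Fin M) → R} (hE : AltMod J E)
    (σ : Equiv.Perm (Fin k)) :
    ∀ v, (Equiv.Perm.sign σ : ℤ) • E (v ∘ σ) - E v ∈ J := by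
  refine Equiv.Perm.swap_induction_on σ (by intro v; simp) ?_
  intro f x y hxy ih v
  have h1 : v ∘ ⇑(Equiv.swap x y * f) = (v ∘ ⇑(Equiv.swap x y)) ∘ ⇑f := by
    funext t; simp [Function.comp, Equiv.Perm.mul_apply]
  have hs : (Equiv.Perm.sign (Equiv.swap x y * f) : ℤ) = -(Equiv.Perm.sign f : ℤ) := by
    rw [Equiv.Perm.sign_mul, Equiv.Perm.sign_swap hxy]; simp
  rw [h1, hs]
  have hA := ih (v ∘ ⇑(Equiv.swap x y))
  have hB := hE v x y hxy
  have : (-(Equiv.Perm.sign f : ℤ)) • E ((v ∘ ⇑(Equiv.swap x y)) ∘ ⇑f) - E v =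
      -((Equiv.Perm.sign f : ℤ) • E ((v ∘ ⇑(Equiv.swap x y)) ∘ ⇑f) - E (v ∘ ⇑(Equiv.swap x y)))
      - (E (v ∘ ⇑(Equiv.swap x y)) + E v) := by ring_nf
  rw [this]
  exact sub_mem (neg_mem hA) hB

lemma symz_congr {k : ℕ} {J : Ideal R} {E : (Fin k → Fin M) → R} (hE : AltMod J E) (w) :
    symz E w - E w ∈ J := by
  have key : (∑ σ : Equiv.Perm (Fin k), (Equiv.Perm.sign σ : ℤ) • E (w ∘ σ))
      - (k.factorial : ℕ) • E w ∈ J := by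
    have h1 : (∑ σ : Equiv.Perm (Fin k), (Equiv.Perm.sign σ : ℤ) • E (w ∘ σ))
        - (k.factorial : ℕ) • E w
        = ∑ σ : Equiv.Perm (Fin k), ((Equiv.Perm.sign σ : ℤ) • E (w ∘ σ) - E w) := by
      rw [Finset.sum_sub_distrib, Finset.sum_const, Finset.card_univ, Fintype.card_perm,
        Fintype.card_fin]
    rw [h1]
    exact Submodule.sum_mem _ fun σ _ => signed_congr hE σ w
  have h2 : symz E w - E w
      = ((k.factorial : ℂ))⁻¹ • ((∑ σ : Equiv.Perm (Fin k), (Equiv.Perm.sign σ : ℤ) • E (w ∘ σ))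
        - (k.factorial : ℕ) • E w) := by
    rw [smul_sub]
    unfold symz
    congr 1
    rw [← Nat.cast_smul_eq_nsmul ℂ, smul_smul,
      inv_mul_cancel₀ (Nat.cast_ne_zero.mpr (Nat.factorial_ne_zero k)), one_smul]
  rw [h2]
  exact csmul_mem _ key

/-- Wedge of a 1-tensor with a `k`-tensor (cofactor-expansion formula). -/
def wedge {k : ℕ} (u : Fin M → R) (T : (Fin k → Fin M) → R) : (Fin (k+1) → Fin M) → R :=
  fun w => ∑ a : Fin (k+1), (-1 : R) ^ (a : ℕ) * (u (w a) * T (w ∘ a.succAbove))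

lemma cons_comp_zero_succAbove {k : ℕ} (j : Fin M) (v : Fin (k+1) → Fin M) :
    (Fin.cons j v) ∘ (0 : Fin (k+2)).succAbove = v := by
  funext x; simp [Fin.zero_succAbove]

lemma cons_comp_succ_succAbove {k : ℕ} (j : Fin M) (v : Fin (k+1) → Fin M) (b : Fin (k+1)) :
    (Fin.cons j v) ∘ (b.succ).succAbove = Fin.cons j (v ∘ b.succAbove) := by
  funext x
  cases x using Fin.cases with
  | zero => simp
  | succ y => simp [Fin.succ_succAbove_succ]

lemma bdry_wedge (G : Fin M → R) {k : ℕ} (u : Fin M → R) (T : (Fin (k+1) → Fin M) → R)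
    (v : Fin (k+1) → Fin M) :
    bdry G (wedge u T) v = (∑ j, u j * G j) * T v - wedge u (bdry G T) v := by
  unfold bdry wedge
  have step1 : ∀ j : Fin M,
      G j * ∑ a : Fin (k+2), (-1 : R) ^ (a : ℕ) *
        (u ((Fin.cons j v : Fin (k+2) → Fin M) a) * T ((Fin.cons j v : Fin (k+2) → Fin M) ∘ a.succAbove))
      = G j * (u j * T v) + ∑ b : Fin (k+1), (-1 : R) ^ ((b : ℕ) + 1) *
          (G j * (u (v b) * T (Fin.cons j (v ∘ b.succAbove)))) := by
    intro j
    rw [Fin.sum_univ_succ]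
    simp only [Fin.cons_zero, cons_comp_zero_succAbove, Fin.val_zero, pow_zero, one_mul,
      Fin.val_succ, Fin.cons_succ, cons_comp_succ_succAbove]
    rw [mul_add, Finset.mul_sum]
    congr 1
    refine Finset.sum_congr rfl fun b _ => by ring
  rw [Finset.sum_congr rfl fun j _ => step1 j, Finset.sum_add_distrib, Finset.sum_comm]
  have step2 : ∀ b : Fin (k+1),
      (∑ j : Fin M, (-1 : R) ^ ((b : ℕ) + 1) *
        (G j * (u (v b) * T (Fin.cons j (v ∘ b.succAbove)))))
      = -((-1 : R) ^ (b : ℕ) * (u (v b) * ∑ j : Fin M, G j * T (Fin.cons j (v ∘ b.succAbove)))) := by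
    intro b
    rw [Finset.mul_sum, Finset.mul_sum, ← Finset.sum_neg_distrib]
    refine Finset.sum_congr rfl fun j _ => by ring
  rw [Finset.sum_congr rfl fun b _ => step2 b, Finset.sum_neg_distrib]
  have step3 : (∑ j : Fin M, G j * (u j * T v)) = (∑ j, u j * G j) * T v := by
    rw [Finset.sum_mul]
    exact Finset.sum_congr rfl fun j _ => by ring
  rw [step3]
  beta_reduce
  ring

lemma alt_of_adjacent {k : ℕ} {T : (Fin k → Fin M) → R}
    (h : ∀ (v : Fin k → Fin M) (p q : Fin k), (q : ℕ) = (p : ℕ) + 1 →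
      T (v ∘ Equiv.swap p q) = - T v) : Alt T := by
  have key : ∀ (d : ℕ) (v : Fin k → Fin M) (i j : Fin k), (j : ℕ) = (i : ℕ) + d + 1 →
      T (v ∘ Equiv.swap i j) = - T v := by
    intro d
    induction d with
    | zero => intro v i j hij; exact h v i j (by omega)
    | succ e ih =>
      intro v i j hij
      have hm : (i : ℕ) + 1 < k := by omega
      set m : Fin k := ⟨(i : ℕ) + 1, hm⟩ with hm_def
      have him : i ≠ m := by
        intro hc; rw [Fin.ext_iff] at hc; simp [hm_def] at hc
      have hjm : j ≠ m := by
        intro hc; rw [Fin.ext_iff] at hc; simp [hm_def] at hc; omega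
      have hji : j ≠ i := by
        intro hc; rw [Fin.ext_iff] at hc; omega
      have hswap : Equiv.swap i j = Equiv.swap i m * Equiv.swap m j * Equiv.swap i m := by
        have := Equiv.swap_mul_swap_mul_swap (x := j) (y := m) (z := i) hjm hji
        rw [Equiv.swap_comm m i, Equiv.swap_comm j m] at this
        exact this.symm
      have hcomp : v ∘ ⇑(Equiv.swap i j)
          = ((v ∘ ⇑(Equiv.swap i m)) ∘ ⇑(Equiv.swap m j)) ∘ ⇑(Equiv.swap i m) := by
        rw [hswap]; funext x; simp [Function.comp, Equiv.Perm.mul_apply]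
      rw [hcomp]
      rw [h _ i m rfl, ih _ m j (by simp [hm_def]; omega), h _ i m rfl]
      ring
  intro v i j hij
  rcases lt_or_gt_of_ne hij with hlt | hgt
  · have : (j : ℕ) = (i : ℕ) + ((j : ℕ) - (i : ℕ) - 1) + 1 := by
      have := (Fin.lt_def).mp hlt; omega
    exact key _ v i j this
  · rw [Equiv.swap_comm]
    have : (i : ℕ) = (j : ℕ) + ((i : ℕ) - (j : ℕ) - 1) + 1 := by
      have := (Fin.lt_def).mp hgt; omega
    exact key _ v j i this

lemma swap_succAbove_adj {k : ℕ} {p q : Fin (k+1)} (h : (q : ℕ) = (p : ℕ) + 1) (x : Fin k) :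
    Equiv.swap p q (p.succAbove x) = q.succAbove x := by
  have hpq : p ≠ q := by intro hc; rw [Fin.ext_iff] at hc; omega
  rcases lt_trichotomy (x : ℕ) (p : ℕ) with hx | hx | hx
  · have h1 : p.succAbove x = x.castSucc := Fin.succAbove_of_castSucc_lt _ _ (by
      rw [Fin.lt_def]; simpa using hx)
    have h2 : q.succAbove x = x.castSucc := Fin.succAbove_of_castSucc_lt _ _ (by
      rw [Fin.lt_def]; simp; omega)
    rw [h1, h2]
    apply Equiv.swap_apply_of_ne_of_ne
    · intro hc; rw [Fin.ext_iff] at hc; simp at hc; omega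
    · intro hc; rw [Fin.ext_iff] at hc; simp at hc; omega
  · have h1 : p.succAbove x = x.succ := Fin.succAbove_of_le_castSucc _ _ (by
      rw [Fin.le_def]; simp; omega)
    have h2 : q.succAbove x = x.castSucc := Fin.succAbove_of_castSucc_lt _ _ (by
      rw [Fin.lt_def]; simp; omega)
    have h3 : x.succ = q := by rw [Fin.ext_iff]; simp; omega
    rw [h1, h3, Equiv.swap_apply_right, h2]
    rw [Fin.ext_iff]; simp; omega
  · have h1 : p.succAbove x = x.succ := Fin.succAbove_of_le_castSucc _ _ (by
      rw [Fin.le_def]; simp; omega)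
    have h2 : q.succAbove x = x.succ := Fin.succAbove_of_le_castSucc _ _ (by
      rw [Fin.le_def]; simp; omega)
    rw [h1, h2]
    apply Equiv.swap_apply_of_ne_of_ne
    · intro hc; rw [Fin.ext_iff] at hc; simp at hc; omega
    · intro hc; rw [Fin.ext_iff] at hc; simp at hc; omega

lemma swap_succAbove_adj' {k : ℕ} {p q : Fin (k+1)} (h : (q : ℕ) = (p : ℕ) + 1) (x : Fin k) :
    Equiv.swap p q (q.succAbove x) = p.succAbove x := by
  rw [← swap_succAbove_adj h, Equiv.swap_apply_self]

lemma swap_comp_succAbove {k : ℕ} {a : Fin (k+1)} {p q : Fin (k+1)}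
    (hp : p ≠ a) (hq : q ≠ a) (hpq : p ≠ q) :
    ∃ p' q' : Fin k, p' ≠ q' ∧
      ∀ x, Equiv.swap p q (a.succAbove x) = a.succAbove (Equiv.swap p' q' x) := by
  obtain ⟨p', hp'⟩ := Fin.exists_succAbove_eq hp
  obtain ⟨q', hq'⟩ := Fin.exists_succAbove_eq hq
  refine ⟨p', q', ?_, ?_⟩
  · intro hc; apply hpq; rw [← hp', ← hq', hc]
  intro x
  rcases eq_or_ne x p' with rfl | hxp
  · rw [hp', Equiv.swap_apply_left, Equiv.swap_apply_left, hq']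
  rcases eq_or_ne x q' with rfl | hxq
  · rw [hq', Equiv.swap_apply_right, Equiv.swap_apply_right, hp']
  · rw [Equiv.swap_apply_of_ne_of_ne hxp hxq]
    apply Equiv.swap_apply_of_ne_of_ne
    · rw [← hp']; exact fun hc => hxp (Fin.succAbove_right_injective hc)
    · rw [← hq']; exact fun hc => hxq (Fin.succAbove_right_injective hc)

lemma wedge_alt {k : ℕ} (u : Fin M → R) {T : (Fin k → Fin M) → R} (hT : Alt T) :
    Alt (wedge u T) := by
  apply alt_of_adjacent
  intro w p q hpq
  have hpq' : p ≠ q := fun hc => by rw [Fin.ext_iff] at hc; omega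
  unfold wedge
  have key : ∀ a : Fin (k+1),
      (-1 : R) ^ (a : ℕ) * (u ((w ∘ ⇑(Equiv.swap p q)) a)
        * T ((w ∘ ⇑(Equiv.swap p q)) ∘ a.succAbove))
      = -((-1 : R) ^ ((Equiv.swap p q a : Fin (k+1)) : ℕ) *
          (u (w (Equiv.swap p q a)) * T (w ∘ (Equiv.swap p q a).succAbove))) := by
    intro a
    rcases eq_or_ne a p with rfl | hap
    · rw [Equiv.swap_apply_left]
      have hc : (w ∘ ⇑(Equiv.swap a q)) ∘ a.succAbove = w ∘ q.succAbove := by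
        funext x; simp only [Function.comp_apply]; rw [swap_succAbove_adj hpq]
      rw [hc]
      simp only [Function.comp_apply, Equiv.swap_apply_left]
      rw [hpq, pow_succ]
      ring
    rcases eq_or_ne a q with rfl | haq
    · rw [Equiv.swap_apply_right]
      have hc : (w ∘ ⇑(Equiv.swap p a)) ∘ a.succAbove = w ∘ p.succAbove := by
        funext x; simp only [Function.comp_apply]; rw [swap_succAbove_adj' hpq]
      rw [hc]
      simp only [Function.comp_apply, Equiv.swap_apply_right]
      rw [hpq, pow_succ]
      ring
    · rw [Equiv.swap_apply_of_ne_of_ne hap haq]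
      obtain ⟨p', q', hp'q', hcomm⟩ := swap_comp_succAbove (Ne.symm hap) (Ne.symm haq) hpq'
      have hc : (w ∘ ⇑(Equiv.swap p q)) ∘ a.succAbove
          = (w ∘ a.succAbove) ∘ ⇑(Equiv.swap p' q') := by
        funext x; simp only [Function.comp_apply]; rw [hcomm]
      rw [hc, hT _ _ _ hp'q']
      simp only [Function.comp_apply, Equiv.swap_apply_of_ne_of_ne hap haq]
      ring
  rw [Finset.sum_congr rfl fun a _ => key a, Finset.sum_neg_distrib]
  exact congrArg Neg.neg (Equiv.sum_comp (Equiv.swap p q)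
    (fun b => (-1 : R) ^ (b : ℕ) * (u (w b) * T (w ∘ b.succAbove))))

lemma cons_comp_swap {k : ℕ} (m : Fin M) (v : Fin (k+1) → Fin M) (i j : Fin (k+1)) :
    (Fin.cons m (v ∘ ⇑(Equiv.swap i j)) : Fin (k+2) → Fin M)
      = (Fin.cons m v : Fin (k+2) → Fin M) ∘ ⇑(Equiv.swap i.succ j.succ) := by
  funext x
  cases x using Fin.cases with
  | zero =>
    have h0 : Equiv.swap i.succ j.succ (0 : Fin (k+2)) = 0 :=
      Equiv.swap_apply_of_ne_of_ne (Fin.succ_ne_zero i).symm (Fin.succ_ne_zero j).symm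
    simp [h0]
  | succ y =>
    have hy : Equiv.swap i.succ j.succ y.succ = (Equiv.swap i j y).succ := by
      rcases eq_or_ne y i with rfl | hyi
      · rw [Equiv.swap_apply_left, Equiv.swap_apply_left]
      rcases eq_or_ne y j with rfl | hyj
      · rw [Equiv.swap_apply_right, Equiv.swap_apply_right]
      · rw [Equiv.swap_apply_of_ne_of_ne hyi hyj, Equiv.swap_apply_of_ne_of_ne
          (fun hc => hyi (Fin.succ_injective _ hc)) (fun hc => hyj (Fin.succ_injective _ hc))]
    simp [hy]

lemma bdry_alt (G : Fin M → R) {k : ℕ} {T : (Fin (k+2) → Fin M) → R} (hT : Alt T) :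
    Alt (bdry G T) := by
  intro v i j hij
  unfold bdry
  rw [← Finset.sum_neg_distrib]
  refine Finset.sum_congr rfl fun m _ => ?_
  rw [cons_comp_swap, hT _ i.succ j.succ (fun hc => hij (Fin.succ_injective _ hc))]
  ring

lemma cons_cons_swap {k : ℕ} (j m : Fin M) (v : Fin k → Fin M) :
    (Fin.cons m (Fin.cons j v) : Fin (k+2) → Fin M)
      = (Fin.cons j (Fin.cons m v) : Fin (k+2) → Fin M)
          ∘ ⇑(Equiv.swap (0 : Fin (k+2)) 1) := by
  funext x
  cases x using Fin.cases with
  | zero => simp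
  | succ y =>
    cases y using Fin.cases with
    | zero =>
      have : Equiv.swap (0 : Fin (k+2)) 1 1 = 0 := Equiv.swap_apply_right _ _
      simp only [Function.comp_apply]
      rw [show ((0 : Fin (k+1)).succ : Fin (k+2)) = 1 by rfl, this]
      simp
    | succ z =>
      have h1 : (z.succ.succ : Fin (k+2)) ≠ 0 := Fin.succ_ne_zero _
      have h2 : (z.succ.succ : Fin (k+2)) ≠ 1 := by
        intro hc
        have := Fin.succ_injective _ (hc.trans (show (1 : Fin (k+2)) = (0 : Fin (k+1)).succ by rfl))
        exact Fin.succ_ne_zero _ this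
      simp only [Function.comp_apply]
      rw [Equiv.swap_apply_of_ne_of_ne h1 h2]
      simp

lemma bdry_bdry (G : Fin M → R) {k : ℕ} {T : (Fin (k+2) → Fin M) → R} (hT : Alt T)
    (v : Fin k → Fin M) : bdry G (bdry G T) v = 0 := by
  unfold bdry
  have key : ∀ j m : Fin M, G j * (G m * T (Fin.cons m (Fin.cons j v)))
      = -(G m * (G j * T (Fin.cons j (Fin.cons m v)))) := by
    intro j m
    rw [cons_cons_swap j m v, hT _ 0 1 (by simp [Fin.ext_iff])]
    ring
  have hsum : (∑ j, G j * ∑ m, G m * T (Fin.cons m (Fin.cons j v)))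
      = -(∑ j, G j * ∑ m, G m * T (Fin.cons m (Fin.cons j v))) := by
    calc (∑ j, G j * ∑ m, G m * T (Fin.cons m (Fin.cons j v)))
        = ∑ j, ∑ m, G j * (G m * T (Fin.cons m (Fin.cons j v))) := by
          simp [Finset.mul_sum]
      _ = ∑ j, ∑ m, -(G m * (G j * T (Fin.cons j (Fin.cons m v)))) := by
          exact Finset.sum_congr rfl fun j _ => Finset.sum_congr rfl fun m _ => key j m
      _ = ∑ m, ∑ j, -(G m * (G j * T (Fin.cons j (Fin.cons m v)))) := Finset.sum_comm
      _ = -(∑ m, G m * ∑ j, G j * T (Fin.cons j (Fin.cons m v))) := by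
          simp [Finset.mul_sum, Finset.sum_neg_distrib]
  exact eq_zero_of_self_eq_neg hsum

lemma bdry_mem (G : Fin M → R) {k : ℕ} {J : Ideal R} {T : (Fin (k+1) → Fin M) → R}
    (hT : ∀ x, T x ∈ J) (v : Fin k → Fin M) : bdry G T v ∈ J :=
  Submodule.sum_mem _ fun j _ => J.mul_mem_left _ (hT _)

lemma wedge_mem {k : ℕ} (u : Fin M → R) {J : Ideal R} {T : (Fin k → Fin M) → R}
    (hT : ∀ x, T x ∈ J) (w : Fin (k+1) → Fin M) : wedge u T w ∈ J :=
  Submodule.sum_mem _ fun a _ => J.mul_mem_left _ (J.mul_mem_left _ (hT _))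

theorem engine {L : ℕ} (G : Fin M → R) (hML : M < L + 2) (t : ℕ → R) (J : ℕ → Ideal R)
    (hJmono : ∀ s, J s ≤ J (s+1))
    (hJt : ∀ s < L, t s ∈ J (s+1))
    (hJdec : ∀ s < L, ∀ x ∈ J (s+1), ∃ q r, r ∈ J s ∧ x = t s * q + r)
    (hreg : ∀ s < L, ∀ p, t s * p ∈ J s → p ∈ J s)
    (hmem : ∀ s < L, ∃ u : Fin M → R, t s - (∑ j, u j * G j) ∈ J s) :
    ∀ i s, s + i = L →
      ∀ T : (Fin (s+2) → Fin M) → R, Alt T → (∀ v, bdry G T v ∈ J s) →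
      ∃ E : (Fin (s+3) → Fin M) → R, Alt E ∧ ∀ v, T v - bdry G E v ∈ J s := by
  intro i
  induction i with
  | zero =>
    intro s hs T hT _
    refine ⟨0, fun v i j _ => by simp, fun v => ?_⟩
    have hv : ∃ a b : Fin (s+2), a ≠ b ∧ v a = v b := by
      obtain ⟨a, b, hab, hv⟩ := Fintype.exists_ne_map_eq_of_card_lt v (by
        simp only [Fintype.card_fin]; omega)
      exact ⟨a, b, hab, hv⟩
    obtain ⟨a, b, hab, hvab⟩ := hv
    have hT0 : T v = 0 := hT.diag_zero hab hvab
    have hb0 : bdry G (0 : (Fin (s+3) → Fin M) → R) v = 0 := by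
      unfold bdry; simp
    rw [hT0, hb0, sub_zero]
    exact (J s).zero_mem
  | succ i ih =>
    intro s hs T hT hbT
    have hsL : s < L := by omega
    obtain ⟨u, hu⟩ := hmem s hsL
    have hWalt : Alt (wedge u T) := wedge_alt u hT
    have hbW : ∀ v, bdry G (wedge u T) v ∈ J (s+1) := by
      intro v
      rw [bdry_wedge]
      have h1 : (∑ j, u j * G j) * T v
          = t s * T v - (t s - ∑ j, u j * G j) * T v := by ring
      rw [h1]
      refine sub_mem (sub_mem ?_ ?_) ?_
      · exact Ideal.mul_mem_right _ _ (hJt s hsL)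
      · exact Ideal.mul_mem_right _ _ (hJmono s hu)
      · exact hJmono s (wedge_mem u (fun x => hbT x) v)
    obtain ⟨V, hValt, hV⟩ := ih (s+1) (by omega) (wedge u T) hWalt hbW
    choose q r hr hqr using fun v => hJdec s hsL _ (hV v)
    have main : ∀ v : Fin (s+2) → Fin M, T v - bdry G q v ∈ J s := by
      intro v
      apply hreg s hsL
      have hWid : bdry G (wedge u T) v = (∑ j, u j * G j) * T v - wedge u (bdry G T) v :=
        bdry_wedge G u T v
      have hterm : ∀ j : Fin M, G j * wedge u T (Fin.cons j v)
          = G j * bdry G V (Fin.cons j v)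
            + (t s * (G j * q (Fin.cons j v)) + G j * r (Fin.cons j v)) := by
        intro j
        linear_combination (G j) * (hqr (Fin.cons j v))
      have hWexp : bdry G (wedge u T) v
          = bdry G (bdry G V) v + (t s * bdry G q v + bdry G r v) := by
        have h2 : bdry G (wedge u T) v
            = ∑ j, (G j * bdry G V (Fin.cons j v)
              + (t s * (G j * q (Fin.cons j v)) + G j * r (Fin.cons j v))) :=
          Finset.sum_congr rfl fun j _ => hterm j
        rw [h2, Finset.sum_add_distrib, Finset.sum_add_distrib]
        show _ = (∑ j, G j * bdry G V (Fin.cons j v))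
          + (t s * ∑ j, G j * q (Fin.cons j v) + ∑ j, G j * r (Fin.cons j v))
        rw [Finset.mul_sum]
      rw [bdry_bdry G hValt v] at hWexp
      have hcollect : t s * (T v - bdry G q v)
          = (t s - ∑ j, u j * G j) * T v + wedge u (bdry G T) v + bdry G r v := by
        linear_combination hWexp - hWid
      rw [hcollect]
      refine add_mem (add_mem ?_ ?_) ?_
      · exact Ideal.mul_mem_right _ _ hu
      · exact wedge_mem u (fun x => hbT x) v
      · exact bdry_mem G (fun x => hr x) v
    have hqAlt : AltMod (J s) q := by
      intro v i j hij
      apply hreg s hsL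
      have h1 := hqr (v ∘ ⇑(Equiv.swap i j))
      have h2 := hqr v
      have hW : wedge u T (v ∘ ⇑(Equiv.swap i j)) = - wedge u T v := hWalt v i j hij
      have hbV : bdry G V (v ∘ ⇑(Equiv.swap i j)) = - bdry G V v := bdry_alt G hValt v i j hij
      have hkey : t s * (q (v ∘ ⇑(Equiv.swap i j)) + q v)
          = -(r (v ∘ ⇑(Equiv.swap i j)) + r v) := by
        linear_combination hW - hbV - h1 - h2
      rw [hkey]
      exact neg_mem (add_mem (hr _) (hr _))
    refine ⟨symz q, symz_alt q, fun v => ?_⟩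
    have hdiff : bdry G q v - bdry G (symz q) v ∈ J s := by
      unfold bdry
      rw [← Finset.sum_sub_distrib]
      refine Submodule.sum_mem _ fun j _ => ?_
      rw [← mul_sub]
      refine Ideal.mul_mem_left _ _ ?_
      simpa [neg_sub] using neg_mem (symz_congr hqAlt (Fin.cons j v))
    simpa using add_mem (main v) hdiff

end KoszulEngineAux

/-- The graded polynomial ring `S = ℂ[x_0, …, x_n]`. -/
abbrev S (n : ℕ) := MvPolynomial (Fin (n + 1)) ℂ

/-- The `S`-linear map sending a tuple `(a_0, …, a_n)` to `∑ a_i f_i`; its kernel is the full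
module of syzygies of the partial derivatives `f_0, …, f_n`. -/
def syzMap (n : ℕ) (f : S n) : (Fin (n + 1) → S n) →ₗ[S n] S n where
  toFun a := ∑ i, a i * pderiv i f
  map_add' a b := by simp [add_mul, Finset.sum_add_distrib]
  map_smul' c a := by
    simp only [Pi.smul_apply, smul_eq_mul, RingHom.id_apply]
    rw [Finset.mul_sum]
    exact Finset.sum_congr rfl fun i _ => by ring

/-- The basic Koszul (trivial) relation: `f_j` in position `i`, `-f_i` in position `j`,
zero elsewhere. -/
def koszulRel (n : ℕ) (f : S n) (i j : Fin (n + 1)) : Fin (n + 1) → S n :=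
  fun l => if l = i then pderiv j f else if l = j then -(pderiv i f) else 0

/-- The submodule of Koszul (trivial) syzygies, generated by the basic relations.
The graded cohomology module `H^n(K^*(f))` is the quotient of the syzygy module by this
submodule. -/
def koszulSyz (n : ℕ) (f : S n) : Submodule (S n) (Fin (n + 1) → S n) :=
  Submodule.span (S n) { v | ∃ i j : Fin (n + 1), i < j ∧ v = koszulRel n f i j }

namespace MulX0Aux

open KoszulEngineAux

variable {n : ℕ} {f : S n}

lemma diag_zero_of_anti {c : Fin (n+1) → Fin (n+1) → S n}
    (hanti : ∀ i j, c i j = - c j i) (i : Fin (n+1)) : c i i = 0 := by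
  have h2 : (2 : ℂ) • c i i = 0 := by
    rw [two_smul]; nth_rewrite 1 [hanti i i]; simp
  exact smul_eq_zero_cancel two_ne_zero h2

lemma mem_koszulSyz_of_rep {c : Fin (n+1) → Fin (n+1) → S n}
    (hanti : ∀ i j, c i j = - c j i)
    {a : Fin (n+1) → S n} (ha : ∀ l, a l = ∑ j, c l j * pderiv j f) :
    a ∈ koszulSyz n f := by
  have hsum : a = ∑ p ∈ Finset.univ.filter (fun p : Fin (n+1) × Fin (n+1) => p.1 < p.2),
      c p.1 p.2 • koszulRel n f p.1 p.2 := by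
    funext l
    rw [Finset.sum_apply, ha l]
    have hrel : ∀ p : Fin (n+1) × Fin (n+1), p.1 < p.2 →
        (c p.1 p.2 • koszulRel n f p.1 p.2) l
          = c p.1 p.2 * ((if l = p.1 then pderiv p.2 f else 0)
            + (if l = p.2 then -(pderiv p.1 f) else 0)) := by
      rintro ⟨i, j⟩ hij
      have hij' : i ≠ j := ne_of_lt hij
      simp only [Pi.smul_apply, smul_eq_mul]
      congr 1
      unfold koszulRel
      by_cases h1 : l = i
      · have h2 : l ≠ j := fun hc => hij' (h1 ▸ hc ▸ rfl)
        simp only [if_pos h1, if_neg h2]; ring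
      · by_cases h2 : l = j
        · simp only [if_neg h1, if_pos h2]; ring
        · simp only [if_neg h1, if_neg h2]; ring
    rw [Finset.sum_filter]
    have step : (∑ p : Fin (n+1) × Fin (n+1), if p.1 < p.2
          then (c p.1 p.2 • koszulRel n f p.1 p.2) l else 0)
        = ∑ p : Fin (n+1) × Fin (n+1), ((if l = p.1 then (if p.1 < p.2 then
            c p.1 p.2 * pderiv p.2 f else 0) else 0)
          + (if l = p.2 then (if p.1 < p.2 then c p.1 p.2 * (-(pderiv p.1 f)) else 0) else 0)) := by
      refine Finset.sum_congr rfl fun p _ => ?_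
      by_cases hp : p.1 < p.2
      · simp only [if_pos hp, hrel p hp]
        simp only [mul_add, mul_ite, mul_zero]
      · simp [hp]
    rw [step, Finset.sum_add_distrib]
    rw [Fintype.sum_prod_type, Fintype.sum_prod_type]
    have hA : (∑ i : Fin (n+1), ∑ j : Fin (n+1), if l = i then (if i < j then
          c i j * pderiv j f else 0) else 0)
        = ∑ j : Fin (n+1), if l < j then c l j * pderiv j f else 0 := by
      rw [Finset.sum_comm]
      refine Finset.sum_congr rfl fun j _ => ?_
      rw [Finset.sum_ite_eq]
      simp
    have hB : (∑ i : Fin (n+1), ∑ j : Fin (n+1), if l = j then (if i < j then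
          c i j * (-(pderiv i f)) else 0) else 0)
        = ∑ i : Fin (n+1), if i < l then c l i * pderiv i f else 0 := by
      refine Finset.sum_congr rfl fun i _ => ?_
      rw [Finset.sum_ite_eq]
      simp only [Finset.mem_univ, if_true]
      by_cases hil : i < l
      · rw [if_pos hil, if_pos hil, hanti i l]; ring
      · rw [if_neg hil, if_neg hil]
    rw [hA, hB, ← Finset.sum_add_distrib]
    refine (Finset.sum_congr rfl fun j _ => ?_).symm
    rcases lt_trichotomy l j with h | h | h
    · rw [if_pos h, if_neg (asymm h), add_zero]
    · have h1 : ¬ l < j := by simp [h]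
      have h2 : ¬ j < l := by simp [h]
      rw [if_neg h1, if_neg h2, ← h, diag_zero_of_anti hanti l]
      ring
    · rw [if_neg (asymm h), if_pos h, zero_add]
  rw [hsum]
  exact Submodule.sum_mem _ fun p hp => Submodule.smul_mem _ _
    (Submodule.subset_span ⟨p.1, p.2, (Finset.mem_filter.mp hp).2, rfl⟩)

lemma rep_of_mem_koszulSyz {v : Fin (n+1) → S n} (hv : v ∈ koszulSyz n f) :
    ∃ c : Fin (n+1) → Fin (n+1) → S n, (∀ i j, c i j = - c j i)
      ∧ ∀ l, v l = ∑ j, c l j * pderiv j f := by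
  refine Submodule.span_induction ?_ ?_ ?_ ?_ hv
  · rintro x ⟨i, j, hij, rfl⟩
    have hij' : i ≠ j := ne_of_lt hij
    refine ⟨fun l m => (if l = i ∧ m = j then 1 else 0) - (if m = i ∧ l = j then 1 else 0),
      fun l m => by ring, fun l => ?_⟩
    by_cases h1 : l = i
    · have h2 : l ≠ j := fun hc => hij' (h1 ▸ hc ▸ rfl)
      have expand : ∀ m : Fin (n+1),
          ((if l = i ∧ m = j then (1 : S n) else 0) - (if m = i ∧ l = j then 1 else 0))
            * pderiv m f = if m = j then pderiv m f else 0 := by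
        intro m
        simp only [h1, h2, true_and, and_false, if_false, sub_zero]
        by_cases hm : m = j <;> simp [hm, hij', hij'.symm]
      rw [Finset.sum_congr rfl fun m _ => expand m, Finset.sum_ite_eq' Finset.univ j
        (fun m => pderiv m f)]
      unfold koszulRel
      rw [if_pos h1]
      simp
    · by_cases h2 : l = j
      · have expand : ∀ m : Fin (n+1),
            ((if l = i ∧ m = j then (1 : S n) else 0) - (if m = i ∧ l = j then 1 else 0))
              * pderiv m f = if m = i then -(pderiv m f) else 0 := by
          intro m
          simp only [h1, h2, false_and, if_false, and_true, zero_sub]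
          by_cases hm : m = i <;> simp [hm, hij', hij'.symm]
        rw [Finset.sum_congr rfl fun m _ => expand m, Finset.sum_ite_eq' Finset.univ i
          (fun m => -(pderiv m f))]
        unfold koszulRel
        rw [if_neg h1, if_pos h2]
        simp
      · have expand : ∀ m : Fin (n+1),
            ((if l = i ∧ m = j then (1 : S n) else 0) - (if m = i ∧ l = j then 1 else 0))
              * pderiv m f = 0 := by
          intro m
          simp [h1, h2]
        rw [Finset.sum_congr rfl fun m _ => expand m]
        unfold koszulRel
        rw [if_neg h1, if_neg h2]
        simp
  · exact ⟨0, by simp, by simp⟩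
  · rintro x y _ _ ⟨cx, hcx, hx⟩ ⟨cy, hcy, hy⟩
    refine ⟨fun i j => cx i j + cy i j, fun i j => by
      show cx i j + cy i j = -(cx j i + cy j i); rw [hcx i j, hcy i j]; ring, fun l => ?_⟩
    simp only [Pi.add_apply, hx l, hy l, ← Finset.sum_add_distrib]
    exact Finset.sum_congr rfl fun j _ => by ring
  · rintro aa x _ ⟨cx, hcx, hx⟩
    refine ⟨fun i j => aa * cx i j, fun i j => by
      show aa * cx i j = -(aa * cx j i); rw [hcx i j]; ring, fun l => ?_⟩
    simp only [Pi.smul_apply, smul_eq_mul, hx l, Finset.mul_sum]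
    exact Finset.sum_congr rfl fun j _ => by ring

section MainSetup

open KoszulEngineAux

variable {n : ℕ}

/-- The monomial ideals used as the regular-sequence filtration. -/
def Jmon (e : Fin (n+1) → ℕ) (s : ℕ) : Ideal (S n) :=
  Ideal.span ((fun m => (monomial m (1:ℂ) : S n)) ''
    ((fun i : Fin (n+1) => Finsupp.single i (e i)) '' {i : Fin (n+1) | (i : ℕ) < s}))

/-- The chosen regular sequence: powers of the variables. -/
def tseq (e : Fin (n+1) → ℕ) (s : ℕ) : S n :=
  if h : s < n + 1 then (X (⟨s, h⟩ : Fin (n+1)) : S n) ^ (e ⟨s, h⟩) else 1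

lemma Jmon_zero (e : Fin (n+1) → ℕ) : Jmon e 0 = ⊥ := by
  unfold Jmon
  have h : {i : Fin (n+1) | (i : ℕ) < 0} = (∅ : Set (Fin (n+1))) := by
    ext i; simp
  rw [h]
  simp

lemma Jmon_mono (e : Fin (n+1) → ℕ) (s : ℕ) : Jmon e s ≤ Jmon e (s+1) := by
  refine Ideal.span_mono (Set.image_mono (Set.image_mono ?_))
  intro i hi
  exact lt_trans hi (lt_add_one s)

lemma Jmon_succ (e : Fin (n+1) → ℕ) {s : ℕ} (hs : s < n + 1) :
    Jmon e (s+1) = Jmon e s ⊔ Ideal.span {tseq e s} := by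
  unfold Jmon
  have hset : {i : Fin (n+1) | (i : ℕ) < s + 1}
      = {i : Fin (n+1) | (i : ℕ) < s} ∪ {(⟨s, hs⟩ : Fin (n+1))} := by
    ext i
    simp only [Set.mem_setOf_eq, Set.mem_union, Set.mem_singleton_iff, Fin.ext_iff]
    omega
  rw [hset, Set.image_union, Set.image_union, Ideal.span_union]
  congr 1
  rw [Set.image_singleton, Set.image_singleton]
  congr 1
  unfold tseq
  rw [dif_pos hs, X_pow_eq_monomial]

lemma tseq_mem_Jmon_succ (e : Fin (n+1) → ℕ) {s : ℕ} (hs : s < n + 1) :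
    tseq e s ∈ Jmon e (s+1) := by
  rw [Jmon_succ e hs]
  exact Submodule.mem_sup_right (Ideal.subset_span rfl)

lemma Jmon_dec (e : Fin (n+1) → ℕ) {s : ℕ} (hs : s < n + 1) :
    ∀ x ∈ Jmon e (s+1), ∃ q r, r ∈ Jmon e s ∧ x = tseq e s * q + r := by
  intro x hx
  rw [Jmon_succ e hs] at hx
  obtain ⟨y, hy, z, hz, rfl⟩ := Submodule.mem_sup.mp hx
  obtain ⟨qq, hqq⟩ := Ideal.mem_span_singleton'.mp hz
  exact ⟨qq, y, hy, by rw [← hqq]; ring⟩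

lemma Jmon_reg (e : Fin (n+1) → ℕ) {s : ℕ} (hs : s < n + 1) :
    ∀ p : S n, tseq e s * p ∈ Jmon e s → p ∈ Jmon e s := by
  intro p hp
  unfold Jmon at hp ⊢
  rw [mem_ideal_span_monomial_image] at hp ⊢
  intro m hm
  set i0 : Fin (n+1) := ⟨s, hs⟩
  set d : Fin (n+1) →₀ ℕ := Finsupp.single i0 (e i0) with hd
  have hmul : tseq e s * p = monomial d 1 * p := by
    unfold tseq
    rw [dif_pos hs, X_pow_eq_monomial]
  have hdm : d + m ∈ (tseq e s * p).support := by
    rw [hmul, mem_support_iff, coeff_monomial_mul, one_mul]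
    exact mem_support_iff.mp hm
  obtain ⟨m', hm', hle⟩ := hp _ hdm
  obtain ⟨i, hi, rfl⟩ := hm'
  refine ⟨_, ⟨i, hi, rfl⟩, ?_⟩
  intro j
  have hji : i ≠ i0 := by
    intro hc
    rw [hc] at hi
    simp only [Set.mem_setOf_eq] at hi
    exact lt_irrefl s hi
  have := hle j
  rcases eq_or_ne j i with rfl | hj
  · have hdj : d j = 0 := by
      rw [hd, Finsupp.single_apply, if_neg (fun hc : i0 = j => hji hc.symm)]
    simpa [Finsupp.add_apply, hdj] using this
  · rw [Finsupp.single_apply, if_neg (fun hc : i = j => hj hc.symm)]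
    exact Nat.zero_le _

end MainSetup

end MulX0Aux

open KoszulEngineAux MulX0Aux in
theorem mul_x0_injective_aux (n d : ℕ) (f : S n) (hf : f.IsHomogeneous d)
    (htrans : ∀ a : Fin (n + 1) → ℂ, a ≠ 0 → a 0 = 0 →
      ∃ i, i ≠ 0 ∧ eval a (pderiv i f) ≠ 0) :
    ∀ (r : ℕ) (a : Fin (n + 1) → S n), (∀ i, (a i).IsHomogeneous r) →
      syzMap n f a = 0 → (X 0 : S n) • a ∈ koszulSyz n f → a ∈ koszulSyz n f := by
  intro r a _ hsyz hX0a
  classical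
  set Gf : Fin (n+2) → S n := Fin.cons (X 0) (fun i : Fin (n+1) => pderiv i f) with hGf
  have hG0 : Gf 0 = X 0 := by rw [hGf, Fin.cons_zero]
  have hGs : ∀ i : Fin (n+1), Gf i.succ = pderiv i f := fun i => by rw [hGf, Fin.cons_succ]
  -- Nullstellensatz: powers of the variables lie in the ideal (x₀, f₀, …, fₙ)
  have hrad : ∀ i : Fin (n+1), ∃ k : ℕ, (X i : S n) ^ k ∈ Ideal.span (Set.range Gf) := by
    intro i
    have hvan : (X i : S n) ∈ vanishingIdeal ℂ (zeroLocus ℂ (Ideal.span (Set.range Gf))) := by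
      rw [mem_vanishingIdeal_iff]
      intro x hx
      rw [mem_zeroLocus_iff] at hx
      have h0 : x 0 = 0 := by
        have h := hx (Gf 0) (Ideal.subset_span (Set.mem_range_self 0))
        rw [hG0] at h
        simpa using h
      have hxz : x = 0 := by
        by_contra hne
        obtain ⟨i0, _, hne0⟩ := htrans x hne h0
        apply hne0
        have h := hx (Gf i0.succ) (Ideal.subset_span (Set.mem_range_self _))
        rwa [hGs i0] at h
      rw [hxz]
      simp
    rw [vanishingIdeal_zeroLocus_eq_radical] at hvan
    exact Ideal.mem_radical_iff.mp hvan
  choose e he using hrad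
  have hmemG : ∀ s, s < n + 1 →
      ∃ u : Fin (n+2) → S n, tseq e s - (∑ j, u j * Gf j) ∈ Jmon e s := by
    intro s hs
    have ht : tseq e s ∈ Ideal.span (Set.range Gf) := by
      unfold tseq
      rw [dif_pos hs]
      exact he ⟨s, hs⟩
    obtain ⟨u, hu⟩ := Ideal.mem_span_range_iff_exists_fun.mp ht
    refine ⟨u, ?_⟩
    rw [hu, sub_self]
    exact (Jmon e s).zero_mem
  -- representation of X 0 • a by an antisymmetric matrix
  obtain ⟨c, hanti, hc⟩ := rep_of_mem_koszulSyz hX0a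
  have hc' : ∀ l, (X 0 : S n) * a l = ∑ j, c l j * pderiv j f := by
    intro l
    have h := hc l
    rwa [Pi.smul_apply, smul_eq_mul] at h
  -- the 2-cycle
  set Cmat : Fin (n+2) → Fin (n+2) → S n :=
    Fin.cons (Fin.cons 0 a) (fun i : Fin (n+1) => Fin.cons (-(a i)) (c i)) with hCmat
  have hC00 : Cmat 0 0 = 0 := by rw [hCmat]; simp
  have hC0s : ∀ j : Fin (n+1), Cmat 0 j.succ = a j := fun j => by rw [hCmat]; simp
  have hCs0 : ∀ i : Fin (n+1), Cmat i.succ 0 = -(a i) := fun i => by rw [hCmat]; simp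
  have hCss : ∀ i j : Fin (n+1), Cmat i.succ j.succ = c i j := fun i j => by rw [hCmat]; simp
  have hCanti : ∀ p q, Cmat p q = -(Cmat q p) := by
    intro p q
    cases p using Fin.cases with
    | zero =>
      cases q using Fin.cases with
      | zero => rw [hC00]; simp
      | succ j => rw [hC0s j, hCs0 j]; simp
    | succ i =>
      cases q using Fin.cases with
      | zero => rw [hCs0 i, hC0s i]
      | succ j => rw [hCss i j, hCss j i]; exact hanti i j
  set Ctens : (Fin 2 → Fin (n+2)) → S n := fun w => Cmat (w 0) (w 1) with hCtens
  have hAltC : Alt Ctens := by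
    intro v i j hij
    have hcase : (i = 0 ∧ j = 1) ∨ (i = 1 ∧ j = 0) := by
      have h1 : (i : ℕ) < 2 := i.isLt
      have h2 : (j : ℕ) < 2 := j.isLt
      have h3 : (i : ℕ) ≠ (j : ℕ) := fun hc => hij (Fin.ext hc)
      have h1' : (i : ℕ) = 0 ∨ (i : ℕ) = 1 := by omega
      have h2' : (j : ℕ) = 0 ∨ (j : ℕ) = 1 := by omega
      rcases h1' with h4 | h4 <;> rcases h2' with h5 | h5
      · omega
      · exact Or.inl ⟨Fin.ext h4, Fin.ext h5⟩
      · exact Or.inr ⟨Fin.ext h4, Fin.ext h5⟩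
      · omega
    have hval : ((v ∘ ⇑(Equiv.swap i j)) 0 = v 1) ∧ ((v ∘ ⇑(Equiv.swap i j)) 1 = v 0) := by
      rcases hcase with ⟨rfl, rfl⟩ | ⟨rfl, rfl⟩ <;> constructor <;>
        simp [Function.comp, Equiv.swap_apply_left, Equiv.swap_apply_right]
    show Cmat ((v ∘ ⇑(Equiv.swap i j)) 0) ((v ∘ ⇑(Equiv.swap i j)) 1) = - Cmat (v 0) (v 1)
    rw [hval.1, hval.2]
    exact hCanti (v 1) (v 0)
  have hbC : ∀ v : Fin 1 → Fin (n+2), bdry Gf Ctens v = 0 := by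
    intro v
    have hCt : ∀ j : Fin (n+2), Ctens (Fin.cons j v) = Cmat j (v 0) := by
      intro j
      rw [hCtens]
      show Cmat ((Fin.cons j v : Fin 2 → Fin (n+2)) 0) ((Fin.cons j v : Fin 2 → Fin (n+2)) 1) = _
      have he1 : ((1 : Fin 2)) = Fin.succ (0 : Fin 1) := rfl
      rw [show ((Fin.cons j v : Fin 2 → Fin (n+2)) 0) = j from Fin.cons_zero _ _, he1,
        show ((Fin.cons j v : Fin 2 → Fin (n+2)) (Fin.succ 0)) = v 0 from Fin.cons_succ _ _ _]
    unfold bdry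
    rw [Finset.sum_congr rfl fun j _ => by rw [hCt j]]
    rcases Fin.eq_zero_or_eq_succ (v 0) with h | ⟨l, h⟩
    · rw [h, Fin.sum_univ_succ, hG0, hC00, mul_zero, zero_add]
      have hterm : ∀ i : Fin (n+1), Gf i.succ * Cmat i.succ 0 = -(a i * pderiv i f) := by
        intro i; rw [hGs i, hCs0 i]; ring
      rw [Finset.sum_congr rfl fun i _ => hterm i, Finset.sum_neg_distrib]
      have hsyz' : (∑ i, a i * pderiv i f) = 0 := hsyz
      rw [hsyz', neg_zero]
    · rw [h, Fin.sum_univ_succ, hG0, hC0s l]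
      have hterm : ∀ i : Fin (n+1), Gf i.succ * Cmat i.succ l.succ = -(c l i * pderiv i f) := by
        intro i; rw [hGs i, hCss i l, hanti i l]; ring
      rw [Finset.sum_congr rfl fun i _ => hterm i, Finset.sum_neg_distrib, hc' l]
      simp
  obtain ⟨E, hEalt, hE⟩ := engine (L := n+1) Gf (by omega) (tseq e) (Jmon e)
    (Jmon_mono e) (fun s hs => tseq_mem_Jmon_succ e hs) (fun s hs => Jmon_dec e hs)
    (fun s hs => Jmon_reg e hs) hmemG (n+1) 0 (by omega) Ctens hAltC
    (fun v => by rw [hbC v]; exact (Jmon e 0).zero_mem)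
  have hEeq : ∀ v, Ctens v = bdry Gf E v := by
    intro v
    have h := hE v
    rw [Jmon_zero, Submodule.mem_bot] at h
    exact sub_eq_zero.mp h
  set v0 : Fin (n+1) → (Fin 2 → Fin (n+2)) := fun l => Fin.cons 0 (fun _ : Fin 1 => l.succ)
    with hv0
  have hv0_0 : ∀ l, v0 l 0 = 0 := fun l => by rw [hv0]; simp
  have hv0_1 : ∀ l, v0 l 1 = l.succ := fun l => by
    rw [hv0]
    show (Fin.cons 0 (fun _ : Fin 1 => l.succ) : Fin 2 → Fin (n+2)) (Fin.succ 0) = l.succ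
    rw [Fin.cons_succ]
  have hCv0 : ∀ l, Ctens (v0 l) = a l := by
    intro l
    rw [hCtens]
    show Cmat (v0 l 0) (v0 l 1) = a l
    rw [hv0_0 l, hv0_1 l, hC0s l]
  set c' : Fin (n+1) → Fin (n+1) → S n := fun l j => E (Fin.cons j.succ (v0 l)) with hc'def
  have key : ∀ l, a l = ∑ j, c' l j * pderiv j f := by
    intro l
    rw [← hCv0 l, hEeq (v0 l)]
    unfold bdry
    rw [Fin.sum_univ_succ]
    have hz : E (Fin.cons 0 (v0 l)) = 0 := by
      refine hEalt.diag_zero (show (0 : Fin 3) ≠ 1 by decide) ?_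
      show (Fin.cons (0 : Fin (n+2)) (v0 l) : Fin 3 → Fin (n+2)) 0
        = (Fin.cons (0 : Fin (n+2)) (v0 l) : Fin 3 → Fin (n+2)) 1
      rw [show ((Fin.cons (0 : Fin (n+2)) (v0 l) : Fin 3 → Fin (n+2)) 0) = 0 from
        Fin.cons_zero _ _]
      have he1 : ((1 : Fin 3)) = Fin.succ (0 : Fin 2) := rfl
      rw [he1, show ((Fin.cons (0 : Fin (n+2)) (v0 l) : Fin 3 → Fin (n+2)) (Fin.succ 0))
        = v0 l 0 from Fin.cons_succ _ _ _]
      rw [hv0_0 l]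
    rw [hz, mul_zero, zero_add]
    refine Finset.sum_congr rfl fun j _ => ?_
    rw [hGs j, hc'def]
    ring
  have hc'anti : ∀ i j, c' i j = - c' j i := by
    intro l j
    have htup : (Fin.cons l.succ (v0 j) : Fin 3 → Fin (n+2))
        = (Fin.cons j.succ (v0 l) : Fin 3 → Fin (n+2)) ∘ ⇑(Equiv.swap (0 : Fin 3) 2) := by
      funext x
      cases x using Fin.cases with
      | zero =>
        simp only [Function.comp_apply, Equiv.swap_apply_left]
        rw [show ((Fin.cons l.succ (v0 j) : Fin 3 → Fin (n+2)) 0) = l.succ from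
          Fin.cons_zero _ _]
        rw [show ((2 : Fin 3)) = Fin.succ 1 from rfl,
          show ((Fin.cons j.succ (v0 l) : Fin 3 → Fin (n+2)) (Fin.succ 1)) = v0 l 1 from
            Fin.cons_succ _ _ _, hv0_1 l]
      | succ y =>
        cases y using Fin.cases with
        | zero =>
          have h1 : Equiv.swap (0 : Fin 3) 2 ((0 : Fin 2).succ) = (0 : Fin 2).succ :=
            Equiv.swap_apply_of_ne_of_ne (by decide) (by decide)
          simp only [Function.comp_apply, h1]
          rw [show ((Fin.cons l.succ (v0 j) : Fin 3 → Fin (n+2)) ((0 : Fin 2).succ))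
              = v0 j 0 from Fin.cons_succ _ _ _,
            show ((Fin.cons j.succ (v0 l) : Fin 3 → Fin (n+2)) ((0 : Fin 2).succ))
              = v0 l 0 from Fin.cons_succ _ _ _, hv0_0 j, hv0_0 l]
        | succ z =>
          have hz0 : z = 0 := Subsingleton.elim z 0
          subst hz0
          have h2 : ((0 : Fin 1).succ.succ : Fin 3) = 2 := rfl
          have h1 : Equiv.swap (0 : Fin 3) 2 ((0 : Fin 1).succ.succ) = 0 := by
            rw [h2]; exact Equiv.swap_apply_right _ _
          simp only [Function.comp_apply, h1]
          rw [show ((Fin.cons l.succ (v0 j) : Fin 3 → Fin (n+2)) ((0 : Fin 1).succ.succ))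
              = v0 j ((0:Fin 1).succ) from Fin.cons_succ _ _ _]
          rw [show ((Fin.cons j.succ (v0 l) : Fin 3 → Fin (n+2)) 0) = j.succ from
            Fin.cons_zero _ _]
          rw [show ((0 : Fin 1).succ) = (1 : Fin 2) from rfl, hv0_1 j]
    have hswapE := hEalt (Fin.cons j.succ (v0 l)) 0 2 (by decide)
    rw [← htup] at hswapE
    rw [hc'def]
    show E (Fin.cons j.succ (v0 l)) = - E (Fin.cons l.succ (v0 j))
    rw [hswapE]
    ring
  exact mem_koszulSyz_of_rep hc'anti key

/-- The singular locus of the projective hypersurface `D : f = 0`. -/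
def projSing (n : ℕ) (f : S n) : Set (Projectivization ℂ (Fin (n + 1) → ℂ)) :=
  { p | ∀ i, eval p.rep (pderiv i f) = 0 }


/-- Suppose `f` is homogeneous of degree `d`, `D : f = 0` has only isolated singularities, and
the hyperplane `x_0 = 0` is transversal to `D` (the restriction of `f` to `x_0 = 0` defines a
smooth hypersurface in `ℙ^{n-1}`; in particular no singular point of `D` lies on this
hyperplane).  Then multiplication by `x_0` induces an injection
`H^n(K^*(f))_{s-1} → H^n(K^*(f))_s` for every `s`:  identifying `H^n(K^*(f))_{r+n}` with
degree-`r` syzygies modulo Koszul syzygies, if a homogeneous degree-`r` syzygy `a` becomes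
trivial after multiplication by `x_0`, then `a` was already trivial. -/
theorem mul_x0_injective (n d : ℕ) (f : S n) (hf : f.IsHomogeneous d)
    (hiso : (projSing n f).Finite)
    (htrans : ∀ a : Fin (n + 1) → ℂ, a ≠ 0 → a 0 = 0 →
      ∃ i, i ≠ 0 ∧ eval a (pderiv i f) ≠ 0) :
    ∀ (r : ℕ) (a : Fin (n + 1) → S n), (∀ i, (a i).IsHomogeneous r) →
      syzMap n f a = 0 → (X 0 : S n) • a ∈ koszulSyz n f → a ∈ koszulSyz n f :=
  fun r a ha hsyz hX0 => mul_x0_injective_aux n d f hf htrans r a ha hsyz hX0
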